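/- Let n ≥ 6 be even and K a field in which -1 is not a square. With X and J_{n-1} as above, the contracted semigroup algebras KX and K J_{n-1} are NOT isomorphic as K-algebras. -/

import Mathlib

/-- `sgPow S i` is the set `Sⁱ` of all products of `i` elements of `S`
(with the convention `S⁰ = S¹ = S`). -/
def sgPow (S : Type*) [Mul S] : ℕ → Set S
  | 0 => Set.univ
  | 1 => Set.univ
  | n + 2 => Set.image2 (· * ·) (sgPow S (n + 1)) Set.univ

/-- A semigroup with zero is nilpotent of class `c` if `S^(c+1) = {0}` and `S^c ≠ {0}`. -/
def IsNilpotentOfClass (S : Type*) [SemigroupWithZero S] (c : ℕ) : Prop :=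
  sgPow S (c + 1) = {0} ∧ sgPow S c ≠ {0}

/-- `mpow x i` is the power `xⁱ` in a magma, for `i ≥ 1` (with `mpow x 0 = x` by convention). -/
def mpow {S : Type*} [Mul S] (x : S) : ℕ → S
  | 0 => x
  | 1 => x
  | n + 2 => mpow x (n + 1) * x
section AlgebraDefs

variable (K : Type*) [Field K] (A : Type*) [NonUnitalRing A] [Module K A]
  [SMulCommClass K A A] [IsScalarTower K A A]

/-- `algPow K A i` is the submodule `Aⁱ` spanned by all products of `i` elements
(with `A⁰ = A¹ = A`). -/
def algPow : ℕ → Submodule K A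
  | 0 => ⊤
  | 1 => ⊤
  | n + 2 => Submodule.span K (Set.image2 (· * ·) ((algPow (n + 1) : Submodule K A) : Set A) Set.univ)

/-- The dimension of the layer `Aⁱ/Aⁱ⁺¹`. -/
noncomputable def algLayerDim (i : ℕ) : ℕ :=
  Module.finrank K
    (↥(algPow K A i) ⧸ (algPow K A (i + 1)).comap (algPow K A i).subtype)

/-- The coclass of the nilpotent quotient `A/Aⁱ`, namely `dim (A/Aⁱ) - (i - 1)`. -/
noncomputable def algCcQuot (i : ℕ) : ℕ :=
  Module.finrank K (A ⧸ algPow K A i) - (i - 1)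

/-- A finitely generated residually nilpotent algebra has coclass `r` if the coclasses
of its nilpotent quotients `A/Aⁱ` converge to `r`. -/
def HasCoclassAlg (r : ℕ) : Prop :=
  ∀ᶠ i in Filter.atTop, algCcQuot K A i = r

/-- The two-sided annihilator of an algebra, as a submodule. -/
def twoSidedAnn : Submodule K A where
  carrier := {a | (∀ b, a * b = 0) ∧ ∀ b, b * a = 0}
  add_mem' := by
    intro a b ha hb
    exact ⟨fun c => by rw [add_mul, ha.1 c, hb.1 c, add_zero],
           fun c => by rw [mul_add, ha.2 c, hb.2 c, add_zero]⟩
  zero_mem' := ⟨fun b => zero_mul b, fun b => mul_zero b⟩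
  smul_mem' := by
    intro k a ha
    exact ⟨fun b => by rw [smul_mul_assoc, ha.1 b, smul_zero],
           fun b => by rw [mul_smul_comm, ha.2 b, smul_zero]⟩

/-- The right annihilator of an algebra, as a submodule. -/
def rightAnn : Submodule K A where
  carrier := {a | ∀ b, b * a = 0}
  add_mem' := by
    intro a b ha hb c
    rw [mul_add, ha c, hb c, add_zero]
  zero_mem' := fun b => mul_zero b
  smul_mem' := by
    intro k a ha b
    rw [mul_smul_comm, ha b, smul_zero]

end AlgebraDefs

/-- `IsContractedAlgebra K f` asserts that `f : S → A` exhibits the algebra `A` as the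
contracted semigroup algebra of the semigroup-with-zero `S` over the field `K`:
`f` is multiplicative, sends zero to zero, and the images of the non-zero elements
of `S` form a `K`-basis of `A`. -/
def IsContractedAlgebra (K : Type*) [Field K] {S A : Type*} [SemigroupWithZero S]
    [NonUnitalRing A] [Module K A] (f : S → A) : Prop :=
  f 0 = 0 ∧ (∀ s t : S, f (s * t) = f s * f t) ∧
  LinearIndependent K (fun s : {s : S // s ≠ 0} => f s.1) ∧
  Submodule.span K (Set.range fun s : {s : S // s ≠ 0} => f s.1) = ⊤
/-- `IsCC1Sg n a b c S u v` asserts that `S` is the nilpotent semigroup of order `n`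
with zero given by the presentation
`⟨u, v ∣ u^(n-1) = u^n, u*v = u^a, v*u = u^b, v*v = u^c⟩`:
its distinct elements are `u, u², …, u^(n-2), v` and the zero `u^(n-1)`. -/
def IsCC1Sg (n a b c : ℕ) (S : Type*) [SemigroupWithZero S] (u v : S) : Prop :=
  mpow u (n - 1) = 0 ∧ u * v = mpow u a ∧ v * u = mpow u b ∧ v * v = mpow u c ∧
  v ≠ 0 ∧ (∀ i, 1 ≤ i → i ≤ n - 2 → mpow u i ≠ 0) ∧
  (∀ i j, 1 ≤ i → i ≤ n - 2 → 1 ≤ j → j ≤ n - 2 → mpow u i = mpow u j → i = j) ∧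
  (∀ i, 1 ≤ i → i ≤ n - 2 → v ≠ mpow u i) ∧
  (∀ s : S, s = 0 ∨ s = v ∨ ∃ i, 1 ≤ i ∧ i ≤ n - 2 ∧ s = mpow u i)

/-! In `K X` the basis vector `v` squares to zero but is not a product of two elements, so it
lies outside `(K X)²`. In `K J_{n-1}` write `x = p(u) + β v` with `p(0) = 0`; as `uv = vu = 0`
and `v² = u^{n-2}`, `x² = (p² + β² X^{n-2})(u)`. If `x² = 0`, the coefficients of this polynomial
vanish in degrees `1, …, n - 2`, so the trailing coefficient `a` of `p` would satisfy `a² = 0` or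
`a² + β² = 0`; as `-1` is not a square, `p` vanishes to order at least `2` and `β = 0`, i.e.
`x ∈ (K J_{n-1})²`. An isomorphism would preserve both properties. -/

open Polynomial

theorem eq_zero_of_mul_self_add_mul_self_eq_zero' {K : Type*} [Field K]
    (hK : ∀ a : K, a * a ≠ -1) {a b : K} (h : a * a + b * b = 0) : a = 0 := by
  by_contra ha
  exact hK (b / a) (by field_simp; linear_combination h)

theorem Polynomial.eq_zero_and_coeff_eq_zero_of_coeff_mul_self {K : Type*} [Field K]
    (hK : ∀ a : K, a * a ≠ -1) {p : K[X]} {N : ℕ} {β : K}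
    (hlt : ∀ t < N, (p * p).coeff t = 0) (hN : (p * p).coeff N = -(β * β)) :
    β = 0 ∧ ∀ t, 2 * t ≤ N → p.coeff t = 0 := by
  rcases eq_or_ne p 0 with rfl | hp
  · simpa [mul_self_eq_zero, eq_comm] using hN
  have hdeg : (p * p).natTrailingDegree = 2 * p.natTrailingDegree := by
    rw [natTrailingDegree_mul hp hp, two_mul]
  have hlead : (p * p).coeff (2 * p.natTrailingDegree) = p.trailingCoeff * p.trailingCoeff := by
    rw [← hdeg, ← trailingCoeff_mul]
    rfl
  have hN_lt : N < 2 * p.natTrailingDegree := by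
    by_contra! hle
    refine trailingCoeff_nonzero_iff_nonzero.mpr hp
      (eq_zero_of_mul_self_add_mul_self_eq_zero' hK
        (b := if 2 * p.natTrailingDegree = N then β else 0) ?_)
    rw [← hlead]
    split_ifs with h
    · rw [h, hN, neg_add_cancel]
    · rw [hlt _ (lt_of_le_of_ne hle h), mul_zero, add_zero]
  refine ⟨?_, fun t ht => coeff_eq_zero_of_lt_natTrailingDegree (by omega)⟩
  have hN0 := coeff_eq_zero_of_lt_natTrailingDegree (hdeg ▸ hN_lt)
  rw [hN, neg_eq_zero] at hN0
  exact mul_self_eq_zero.mp hN0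

section AlgPow

variable {K A : Type*} [Field K] [NonUnitalRing A] [Module K A]

theorem mul_mem_algPow_two (a b : A) : a * b ∈ algPow K A 2 :=
  Submodule.subset_span (Set.mem_image2_of_mem (Submodule.mem_top (R := K)) (Set.mem_univ b))

theorem algPow_two_le_of_span_eq_top [SMulCommClass K A A] [IsScalarTower K A A] {s : Set A}
    (hs : Submodule.span K s = ⊤) {V : Submodule K A}
    (h : ∀ x ∈ s, ∀ y ∈ s, x * y ∈ V) : algPow K A 2 ≤ V := by
  refine Submodule.span_le.mpr ?_
  rintro _ ⟨a, -, b, -, rfl⟩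
  have hab : a * b ∈
      Submodule.map₂ (LinearMap.mul K A) (Submodule.span K s) (Submodule.span K s) := by
    rw [hs]
    exact Submodule.apply_mem_map₂ _ Submodule.mem_top Submodule.mem_top
  rw [Submodule.map₂_span_span] at hab
  refine Submodule.span_le.mpr ?_ hab
  rintro _ ⟨x, hx, y, hy, rfl⟩
  exact h x hx y hy

theorem mem_algPow_two_of_map_mem {B : Type*} [NonUnitalRing B] [Module K B] {e : A →ₙₐ[K] B}
    (he : Function.Bijective e) {x : A} (hx : e x ∈ algPow K B 2) : x ∈ algPow K A 2 := by
  have hle : algPow K B 2 ≤ (algPow K A 2).map (e : A →ₗ[K] B) := by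
    refine Submodule.span_le.mpr ?_
    rintro _ ⟨b₁, -, b₂, -, rfl⟩
    obtain ⟨a₁, rfl⟩ := he.2 b₁
    obtain ⟨a₂, rfl⟩ := he.2 b₂
    exact ⟨a₁ * a₂, mul_mem_algPow_two a₁ a₂, map_mul e a₁ a₂⟩
  obtain ⟨y, hy, hyx⟩ := hle hx
  exact he.1 hyx ▸ hy

end AlgPow

section Mpow

variable {S : Type*}

theorem mpow_one [Mul S] (x : S) : mpow x 1 = x := rfl

theorem mpow_succ [Mul S] (x : S) {k : ℕ} (hk : 1 ≤ k) : mpow x (k + 1) = mpow x k * x := by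
  obtain ⟨k, rfl⟩ := Nat.exists_eq_add_of_le' hk
  rfl

theorem mpow_add [Semigroup S] (x : S) {i j : ℕ} (hi : 1 ≤ i) (hj : 1 ≤ j) :
    mpow x (i + j) = mpow x i * mpow x j := by
  induction j, hj using Nat.le_induction with
  | base => exact mpow_succ x hi
  | succ j hj ih => rw [← add_assoc, mpow_succ x (by omega), ih, mpow_succ x hj, mul_assoc]

theorem mpow_eq_zero_of_le [SemigroupWithZero S] {x : S} {m k : ℕ} (hm : 1 ≤ m)
    (h : mpow x m = 0) (hk : m ≤ k) : mpow x k = 0 := by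
  obtain rfl | hlt := hk.eq_or_lt
  · exact h
  · rw [← Nat.add_sub_of_le hk, mpow_add x hm (by omega), h, zero_mul]

theorem mpow_mul_of_mul_eq [Semigroup S] {u v : S} {a : ℕ} (ha : 1 ≤ a) (h : u * v = mpow u a)
    {i : ℕ} (hi : 1 ≤ i) : mpow u i * v = mpow u (i - 1 + a) := by
  obtain ⟨j, rfl⟩ := Nat.exists_eq_add_of_le' hi
  rcases Nat.eq_zero_or_pos j with rfl | hj
  · rwa [mpow_one, Nat.sub_self, zero_add]
  · rw [mpow_succ u hj, mul_assoc, h, ← mpow_add u hj ha, Nat.add_sub_cancel]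

theorem mul_mpow_of_mul_eq [Semigroup S] {u v : S} {b : ℕ} (hb : 1 ≤ b) (h : v * u = mpow u b)
    {i : ℕ} (hi : 1 ≤ i) : v * mpow u i = mpow u (b + i - 1) := by
  induction i, hi using Nat.le_induction with
  | base => rwa [mpow_one, Nat.add_sub_cancel]
  | succ i hi ih =>
    rw [mpow_succ u hi, ← mul_assoc, ih, ← mpow_succ u (by omega)]
    congr 1
    omega

end Mpow

namespace IsCC1Sg

variable {S : Type*} [SemigroupWithZero S] {n a b c : ℕ} {u v : S}

theorem mpow_eq_mpow_iff (h : IsCC1Sg n a b c S u v) {i t : ℕ} (hi : 1 ≤ i) (ht : 1 ≤ t)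
    (htn : t ≤ n - 2) : mpow u i = mpow u t ↔ i = t := by
  obtain ⟨hz, -, -, -, -, hne, hinj, -, -⟩ := h
  refine ⟨fun hit => ?_, fun hit => hit ▸ rfl⟩
  by_cases hin : i ≤ n - 2
  · exact hinj i t hi hin ht htn hit
  · have hi0 : mpow u i = 0 := mpow_eq_zero_of_le (m := n - 1) (by omega) hz (by omega)
    exact absurd (hi0 ▸ hit).symm (hne t ht htn)

theorem exists_mul_eq_mpow (h : IsCC1Sg n a b c S u v) (hn : 3 ≤ n) (ha : 2 ≤ a) (hb : 2 ≤ b)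
    (hc : 2 ≤ c) (x y : S) : ∃ k, 2 ≤ k ∧ x * y = mpow u k := by
  obtain ⟨hz, huv, hvu, hvv, -, -, -, -, hcl⟩ := h
  have hzero : ∃ k, 2 ≤ k ∧ (0 : S) = mpow u k := ⟨n - 1, by omega, hz.symm⟩
  rcases hcl x with rfl | rfl | ⟨i, hi, -, rfl⟩ <;>
    rcases hcl y with rfl | rfl | ⟨j, hj, -, rfl⟩
  all_goals first
    | simpa only [zero_mul, mul_zero] using hzero
    | exact ⟨c, hc, hvv⟩
    | exact ⟨_, by omega, mul_mpow_of_mul_eq (by omega) hvu hj⟩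
    | exact ⟨_, by omega, mpow_mul_of_mul_eq (by omega) huv hi⟩
    | exact ⟨_, by omega, (mpow_add u hi hj).symm⟩

theorem mul_self_eq_zero (h : IsCC1Sg n a b (n - 1) S u v) : v * v = 0 := by
  obtain ⟨hz, -, -, hvv, -⟩ := h
  rw [hvv, hz]

end IsCC1Sg

namespace IsContractedAlgebra

variable {K S A : Type*} [Field K] [SemigroupWithZero S] [NonUnitalRing A] [Module K A]
  {f : S → A}

protected theorem map_zero (hf : IsContractedAlgebra K f) : f 0 = 0 := hf.1

protected theorem map_mul (hf : IsContractedAlgebra K f) (s t : S) : f (s * t) = f s * f t :=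
  hf.2.1 s t

protected theorem linearIndependent (hf : IsContractedAlgebra K f) :
    LinearIndependent K fun s : {s : S // s ≠ 0} => f s.1 :=
  hf.2.2.1

theorem span_eq_top (hf : IsContractedAlgebra K f) :
    Submodule.span K (Set.range fun s : {s : S // s ≠ 0} => f s.1) = ⊤ :=
  hf.2.2.2

noncomputable def basis (hf : IsContractedAlgebra K f) : Module.Basis {s : S // s ≠ 0} K A :=
  Module.Basis.mk hf.linearIndependent hf.span_eq_top.ge

theorem basis_apply (hf : IsContractedAlgebra K f) (s : {s : S // s ≠ 0}) :
    hf.basis s = f s.1 :=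
  Module.Basis.mk_apply hf.linearIndependent hf.span_eq_top.ge s

open Classical in
theorem basis_coord_apply (hf : IsContractedAlgebra K f) (s : {s : S // s ≠ 0}) (t : S) :
    hf.basis.coord s (f t) = if t = s.1 then 1 else 0 := by
  by_cases ht : t = 0
  · rw [ht, hf.map_zero, map_zero, if_neg s.2.symm]
  · rw [← hf.basis_apply ⟨t, ht⟩, Module.Basis.coord_apply, Module.Basis.repr_self_apply]
    simp only [Subtype.ext_iff]

theorem notMem_algPow_two [SMulCommClass K A A] [IsScalarTower K A A]
    (hf : IsContractedAlgebra K f) {s : S} (hs : s ≠ 0) (hprod : ∀ x y : S, x * y ≠ s) :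
    f s ∉ algPow K A 2 := by
  set T : Set {t : S // t ≠ 0} := {t | t.1 ≠ s}
  have hle : algPow K A 2 ≤ Submodule.span K ((fun t => f t.1) '' T) := by
    refine algPow_two_le_of_span_eq_top hf.span_eq_top ?_
    rintro _ ⟨x, rfl⟩ _ ⟨y, rfl⟩
    rw [← hf.map_mul]
    by_cases hxy : x.1 * y.1 = 0
    · rw [hxy, hf.map_zero]
      exact Submodule.zero_mem _
    · exact Submodule.subset_span ⟨⟨_, hxy⟩, hprod x y, rfl⟩
  exact fun hmem =>
    hf.linearIndependent.notMem_span_image (s := T) (x := ⟨s, hs⟩) (fun h => h rfl) (hle hmem)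

end IsContractedAlgebra

section Unitization

variable {K B : Type*} [Field K] [NonUnitalRing B] [Module K B] [SMulCommClass K B B]
  [IsScalarTower K B B]

theorem Unitization.fst_aeval_inr (a : B) (p : K[X]) :
    (aeval (a : Unitization K B) p).fst = p.coeff 0 := by
  have h := aeval_algHom_apply (Unitization.fstHom K B) (a : Unitization K B) p
  simp only [Unitization.fstHom_apply, Unitization.fst_inr] at h
  rw [← h, coeff_zero_eq_aeval_zero]

theorem Unitization.inr_snd_aeval_inr {a : B} {p : K[X]} (hp : p.coeff 0 = 0) :
    ((aeval (a : Unitization K B) p).snd : Unitization K B) = aeval (a : Unitization K B) p :=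
  Unitization.ext (by rw [Unitization.fst_inr, Unitization.fst_aeval_inr, hp]) rfl

theorem inr_pow_eq_mpow {S : Type*} [Mul S] {g : S → B} (hg : ∀ s t, g (s * t) = g s * g t)
    (u : S) {k : ℕ} (hk : 1 ≤ k) : (g u : Unitization K B) ^ k = g (mpow u k) := by
  induction k, hk using Nat.le_induction with
  | base => rw [pow_one, mpow_one]
  | succ k hk ih => rw [pow_succ, ih, ← Unitization.inr_mul, ← hg, mpow_succ u hk]

end Unitization

namespace IsCC1Sg

variable {K S A : Type*} [Field K] [SemigroupWithZero S] [NonUnitalRing A] [Module K A]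
  [SMulCommClass K A A] [IsScalarTower K A A] {n a b c : ℕ} {u v : S} {f : S → A}

theorem notMem_algPow_two (h : IsCC1Sg n a b c S u v) (hf : IsContractedAlgebra K f)
    (hn : 3 ≤ n) (ha : 2 ≤ a) (hb : 2 ≤ b) (hc : 2 ≤ c) : f v ∉ algPow K A 2 := by
  have hprod := h.exists_mul_eq_mpow hn ha hb hc
  obtain ⟨hz, -, -, -, hv, -, -, hvne, -⟩ := h
  refine hf.notMem_algPow_two hv fun x y hxy => ?_
  obtain ⟨k, hk, hxyk⟩ := hprod x y
  by_cases hkn : k ≤ n - 2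
  · exact hvne k (by omega) hkn (hxy ▸ hxyk)
  · exact hv (hxy ▸ hxyk.trans (mpow_eq_zero_of_le (m := n - 1) (by omega) hz (by omega)))

-- `A` has no unit, so polynomials in `f u` are evaluated in its unitization.
local notation "ι" => ((↑) : A → Unitization K A)

theorem exists_inr_eq_aeval_add_smul (hS : IsCC1Sg n (n - 1) (n - 1) (n - 2) S u v)
    (hf : IsContractedAlgebra K f) (x : A) :
    ∃ p : K[X], ∃ β : K, p.coeff 0 = 0 ∧ ι x = aeval (ι (f u)) p + β • ι (f v) := by
  obtain ⟨-, -, -, -, -, -, -, -, hcl⟩ := hS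
  set M : Submodule K (Unitization K A) :=
    LinearMap.range (aeval (ι (f u))).toLinearMap ⊔ K ∙ ι (f v)
  have hspan : Submodule.span K (Set.range fun s : {s : S // s ≠ 0} => f s.1) ≤
      M.comap (Unitization.inrHom K K A) := by
    refine Submodule.span_le.mpr ?_
    rintro _ ⟨⟨s, hs⟩, rfl⟩
    rcases hcl s with rfl | rfl | ⟨i, hi, -, rfl⟩
    · exact absurd rfl hs
    · exact Submodule.mem_sup_right (Submodule.mem_span_singleton_self _)
    · refine Submodule.mem_sup_left ⟨X ^ i, ?_⟩
      rw [AlgHom.toLinearMap_apply, map_pow, aeval_X]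
      exact inr_pow_eq_mpow hf.map_mul u hi
  obtain ⟨_, ⟨p, rfl⟩, _, hβ, hx⟩ :=
    Submodule.mem_sup.mp (hspan (hf.span_eq_top ▸ Submodule.mem_top : x ∈ _))
  obtain ⟨β, rfl⟩ := Submodule.mem_span_singleton.mp hβ
  refine ⟨p, β, ?_, hx.symm⟩
  simpa [Unitization.fst_aeval_inr] using congrArg (fun z : Unitization K A => z.fst) hx

theorem inr_mul_self_eq_aeval (hS : IsCC1Sg n (n - 1) (n - 1) (n - 2) S u v)
    (hf : IsContractedAlgebra K f) (hn : 3 ≤ n) {x : A} {p : K[X]} {β : K}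
    (hp : p.coeff 0 = 0) (hx : ι x = aeval (ι (f u)) p + β • ι (f v)) :
    ι (x * x) = aeval (ι (f u)) (p * p + C (β * β) * X ^ (n - 2)) := by
  obtain ⟨hz, huv, hvu, hvv, -⟩ := hS
  have hzero : f (mpow u (n - 1)) = 0 := by rw [hz, hf.map_zero]
  have huv' : ι (f u) * ι (f v) = 0 := by
    rw [← Unitization.inr_mul, ← hf.map_mul, huv, hzero, Unitization.inr_zero]
  have hvu' : ι (f v) * ι (f u) = 0 := by
    rw [← Unitization.inr_mul, ← hf.map_mul, hvu, hzero, Unitization.inr_zero]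
  have hvv' : ι (f v) * ι (f v) = ι (f u) ^ (n - 2) := by
    rw [← Unitization.inr_mul, ← hf.map_mul, hvv, inr_pow_eq_mpow hf.map_mul u (by omega)]
  obtain ⟨q, hq⟩ := X_dvd_iff.mpr hp
  have hpv : aeval (ι (f u)) p * ι (f v) = 0 := by
    rw [hq, mul_comm, map_mul, aeval_X, mul_assoc, huv', mul_zero]
  have hvp : ι (f v) * aeval (ι (f u)) p = 0 := by
    rw [hq, map_mul, aeval_X, ← mul_assoc, hvu', zero_mul]
  calc ι (x * x)
        = (aeval (ι (f u)) p + β • ι (f v)) * (aeval (ι (f u)) p + β • ι (f v)) := by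
        rw [Unitization.inr_mul, hx]
    _ = aeval (ι (f u)) p * aeval (ι (f u)) p + (β * β) • (ι (f v) * ι (f v)) := by
        simp only [add_mul, mul_add, smul_mul_assoc, mul_smul_comm, hpv, hvp, smul_zero,
          smul_smul, add_zero, zero_add]
    _ = aeval (ι (f u)) (p * p + C (β * β) * X ^ (n - 2)) := by
        rw [hvv', map_add, map_mul, map_mul, aeval_C, map_pow, aeval_X, Algebra.smul_def]

theorem coeff_eq_zero_of_aeval_eq_zero (hS : IsCC1Sg n (n - 1) (n - 1) (n - 2) S u v)
    (hf : IsContractedAlgebra K f) {q : K[X]} (hq : aeval (ι (f u)) q = 0) {t : ℕ}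
    (ht : 1 ≤ t) (htn : t ≤ n - 2) : q.coeff t = 0 := by
  have hut : mpow u t ≠ 0 := by
    obtain ⟨-, -, -, -, -, hne, -⟩ := hS
    exact hne t ht htn
  set c : Unitization K A →ₗ[K] K :=
    hf.basis.coord ⟨mpow u t, hut⟩ ∘ₗ Unitization.sndHom K K A
  have hc : c ∘ₗ (aeval (ι (f u))).toLinearMap = lcoeff K t := by
    refine lhom_ext' fun k => LinearMap.ext_ring ?_
    simp only [LinearMap.comp_apply, AlgHom.toLinearMap_apply, aeval_monomial, map_one, one_mul,
      lcoeff_apply, coeff_monomial]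
    rcases Nat.eq_zero_or_pos k with rfl | hk
    · rw [pow_zero, LinearMap.comp_apply, Unitization.sndHom_apply, Unitization.snd_one, map_zero,
        if_neg (by omega)]
    · simp only [c, LinearMap.comp_apply, Unitization.sndHom_apply,
        inr_pow_eq_mpow hf.map_mul u hk, Unitization.snd_inr, hf.basis_coord_apply,
        hS.mpow_eq_mpow_iff hk ht htn]
  simpa [hq] using (LinearMap.congr_fun hc q).symm

theorem mem_algPow_two_of_mul_self_eq_zero (hS : IsCC1Sg n (n - 1) (n - 1) (n - 2) S u v)
    (hf : IsContractedAlgebra K f) (hK : ∀ a : K, a * a ≠ -1) (hn : 4 ≤ n) {x : A}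
    (hx : x * x = 0) : x ∈ algPow K A 2 := by
  obtain ⟨p, β, hp0, hxp⟩ := hS.exists_inr_eq_aeval_add_smul hf x
  have hsq := hS.inr_mul_self_eq_aeval hf (by omega) hp0 hxp
  rw [hx, Unitization.inr_zero] at hsq
  have hcoeff t (ht : 1 ≤ t) (htn : t ≤ n - 2) :=
    hS.coeff_eq_zero_of_aeval_eq_zero hf hsq.symm ht htn
  simp only [coeff_add, coeff_C_mul_X_pow] at hcoeff
  obtain ⟨rfl, hp⟩ := eq_zero_and_coeff_eq_zero_of_coeff_mul_self hK (N := n - 2) (β := β)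
    (fun t ht => by
      rcases Nat.eq_zero_or_pos t with rfl | ht0
      · rw [mul_coeff_zero, hp0, mul_zero]
      · simpa [ht.ne] using hcoeff t ht0 ht.le)
    (by simpa [eq_neg_iff_add_eq_zero] using hcoeff (n - 2) (by omega) le_rfl)
  obtain ⟨q, rfl⟩ : X * X ∣ p := by
    rw [← pow_two, X_pow_dvd_iff]
    intro d hd
    interval_cases d
    exacts [hp0, hp 1 (by omega)]
  rw [zero_smul, add_zero, mul_assoc, map_mul, aeval_X,
    ← Unitization.inr_snd_aeval_inr (coeff_X_mul_zero q), ← Unitization.inr_mul] at hxp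
  exact Unitization.inr_injective hxp ▸ mul_mem_algPow_two _ _

end IsCC1Sg

theorem statement11_general {K : Type*} [Field K] (n : ℕ) (hn : 6 ≤ n)
    (hK : ∀ a : K, a * a ≠ -1)
    {SX : Type*} [SemigroupWithZero SX] (uX vX : SX)
    (hX : IsCC1Sg n (n / 2) (n / 2) (n - 1) SX uX vX)
    {SJ : Type*} [SemigroupWithZero SJ] (uJ vJ : SJ)
    (hJ : IsCC1Sg n (n - 1) (n - 1) (n - 2) SJ uJ vJ)
    {A : Type*} [NonUnitalRing A] [Module K A] [SMulCommClass K A A] [IsScalarTower K A A]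
    {B : Type*} [NonUnitalRing B] [Module K B] [SMulCommClass K B B] [IsScalarTower K B B]
    (f : SX → A) (hf : IsContractedAlgebra K f)
    (g : SJ → B) (hg : IsContractedAlgebra K g) :
    ¬ ∃ e : A →ₙₐ[K] B, Function.Bijective e := by
  rintro ⟨e, he⟩
  have hv : f vX ∉ algPow K A 2 :=
    hX.notMem_algPow_two hf (by omega) (by omega) (by omega) (by omega)
  have hvv : e (f vX) * e (f vX) = 0 := by
    rw [← map_mul, ← hf.map_mul, hX.mul_self_eq_zero, hf.map_zero, map_zero]
  exact hv <| mem_algPow_two_of_map_mem he <|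
    hJ.mem_algPow_two_of_mul_self_eq_zero hg hK (by omega) hvv

/-- Let `n ≥ 6` be even and `K` a field in which `-1` is not a square. Then the contracted
semigroup algebras of `X` and `J_(n-1)` (as in the previous statement) are NOT isomorphic
as `K`-algebras. -/
theorem statement11 {K : Type*} [Field K] (n : ℕ) (hn : 6 ≤ n) (hev : Even n)
    (hK : ∀ a : K, a * a ≠ -1)
    {SX : Type*} [SemigroupWithZero SX] (uX vX : SX)
    (hX : IsCC1Sg n (n / 2) (n / 2) (n - 1) SX uX vX)
    {SJ : Type*} [SemigroupWithZero SJ] (uJ vJ : SJ)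
    (hJ : IsCC1Sg n (n - 1) (n - 1) (n - 2) SJ uJ vJ)
    {A : Type*} [NonUnitalRing A] [Module K A] [SMulCommClass K A A] [IsScalarTower K A A]
    {B : Type*} [NonUnitalRing B] [Module K B] [SMulCommClass K B B] [IsScalarTower K B B]
    (f : SX → A) (hf : IsContractedAlgebra K f)
    (g : SJ → B) (hg : IsContractedAlgebra K g) :
    ¬ ∃ e : A →ₙₐ[K] B, Function.Bijective e :=
  statement11_general n hn hK uX vX hX uJ vJ hJ f hf g hg
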